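/- Boundedness of φ_k on matrices with nonpositive logarithmic norm: if A ∈ ℝ^{N×N} satisfies ⟨Aw, w⟩ ≤ 0 for all w ∈ ℝ^N, then for every k ≥ 1 the operator norm of φ_k(A) satisfies ‖φ_k(A)‖ ≤ 1/k!. -/

import Mathlib

/-!
If `⟪L x, x⟫ ≤ 0`, then along `u s = e^{sL} x` we have `d/ds ‖u s‖² = 2 ⟪u s, L (u s)⟫ ≤ 0`,
so `e^{tL}` is a contraction for `t ≥ 0`. Bounding the integrand of `φ_k(A)` by
`s^{k-1}/(k-1)!` then gives `‖φ_k(A)‖ ≤ ∫₀¹ s^{k-1}/(k-1)! ds = 1/k!`.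
-/

open Matrix
open NormedSpace  -- for `exp`
open scoped Matrix.Norms.L2Operator  -- the L2 operator norm on matrices

/-- The matrix φ-functions for `k ≥ 1`:
`φ_k(A) = ∫₀¹ e^{(1-s)A} s^{k-1}/(k-1)! ds`. -/
noncomputable def phiMatrix {N : ℕ} (k : ℕ) (A : Matrix (Fin N) (Fin N) ℝ) :
    Matrix (Fin N) (Fin N) ℝ :=
  ∫ s in (0:ℝ)..1, (s ^ (k - 1) / (Nat.factorial (k - 1))) • exp ((1 - s) • A)

open scoped Nat

theorem antitone_norm_of_inner_hasDerivAt_nonpos {E : Type*} [NormedAddCommGroup E]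
    [InnerProductSpace ℝ E] {u u' : ℝ → E} (hu : ∀ s, HasDerivAt u (u' s) s)
    (hinner : ∀ s, inner ℝ (u s) (u' s) ≤ 0) :
    Antitone fun s => ‖u s‖ := by
  have hsq : Antitone fun s => ‖u s‖ ^ 2 :=
    antitone_of_hasDerivAt_nonpos (fun s => (hu s).norm_sq) fun s =>
      mul_nonpos_of_nonneg_of_nonpos zero_le_two (hinner s)
  exact fun a b hab =>
    (pow_le_pow_iff_left₀ (norm_nonneg _) (norm_nonneg _) two_ne_zero).1 (hsq hab)

theorem ContinuousLinearMap.norm_exp_smul_le_one_of_inner_map_self_nonpos {E : Type*}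
    [NormedAddCommGroup E] [InnerProductSpace ℝ E] [CompleteSpace E]
    (L : E →L[ℝ] E) (hL : ∀ x, inner ℝ (L x) x ≤ 0) {t : ℝ} (ht : 0 ≤ t) :
    ‖exp (t • L)‖ ≤ 1 := by
  refine opNorm_le_bound _ zero_le_one fun x => ?_
  have hu (s : ℝ) : HasDerivAt (fun s : ℝ => exp (s • L) x) (L (exp (s • L) x)) s := by
    simpa using (hasDerivAt_exp_smul_const' L s).clm_apply (hasDerivAt_const s x)
  simpa using antitone_norm_of_inner_hasDerivAt_nonpos hu
    (fun s => by rw [real_inner_comm]; exact hL _) ht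

theorem Matrix.norm_exp_smul_le_one_of_dotProduct_mulVec_self_nonpos {n : Type*} [Fintype n]
    [DecidableEq n] (A : Matrix n n ℝ) (hA : ∀ w, A *ᵥ w ⬝ᵥ w ≤ 0) {t : ℝ} (ht : 0 ≤ t) :
    ‖exp (t • A)‖ ≤ 1 := by
  have hcont : Continuous (toEuclideanCLM (𝕜 := ℝ) (n := n)) :=
    AddMonoidHomClass.continuous_of_bound _ 1 fun M => by simp [l2_opNorm_toEuclideanCLM]
  let +nondep : NormedAlgebra ℚ (Matrix n n ℝ) := .restrictScalars ℚ ℝ _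
  rw [← l2_opNorm_toEuclideanCLM, map_exp _ hcont, map_smul]
  refine (toEuclideanCLM (𝕜 := ℝ) (n := n) A).norm_exp_smul_le_one_of_inner_map_self_nonpos
    (fun x => ?_) ht
  rw [real_inner_comm, inner_toEuclideanCLM, dotProduct_comm]
  exact hA _

theorem integral_pow_div_factorial (m : ℕ) :
    ∫ s in (0:ℝ)..1, s ^ m / m ! = 1 / (m + 1)! := by
  rw [intervalIntegral.integral_div, integral_pow, Nat.factorial_succ]
  push_cast
  field_simp
  simp

theorem norm_integral_pow_div_factorial_smul_le {E : Type*} [NormedAddCommGroup E]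
    [NormedSpace ℝ E] {F : ℝ → E} (m : ℕ) (hF : ∀ s ∈ Set.Icc (0:ℝ) 1, ‖F s‖ ≤ 1) :
    ‖∫ s in (0:ℝ)..1, (s ^ m / m !) • F s‖ ≤ 1 / (m + 1)! := by
  rw [← integral_pow_div_factorial]
  refine intervalIntegral.norm_integral_le_of_norm_le zero_le_one
    (Filter.Eventually.of_forall fun s hs => ?_)
    ((intervalIntegral.intervalIntegrable_pow m).div_const _)
  have hs0 : 0 ≤ s := hs.1.le
  rw [norm_smul, Real.norm_of_nonneg (by positivity)]
  exact mul_le_of_le_one_right (by positivity) (hF s (Set.Ioc_subset_Icc_self hs))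

theorem phiMatrix_norm_le_of_dissipative_general
    {N : ℕ} (A : Matrix (Fin N) (Fin N) ℝ)
    (hA : ∀ w : Fin N → ℝ, A.mulVec w ⬝ᵥ w ≤ 0)
    (k : ℕ) :
    ‖phiMatrix k A‖ ≤ 1 / (Nat.factorial k) := by
  -- `k - 1` truncates at `k = 0`, where `(0 - 1 + 1)! = 1 = 0!` still holds.
  have hfac : (k - 1 + 1)! = k ! := by cases k <;> rfl
  rw [← hfac]
  exact norm_integral_pow_div_factorial_smul_le (k - 1) fun s hs =>
    A.norm_exp_smul_le_one_of_dotProduct_mulVec_self_nonpos hA (sub_nonneg.2 hs.2)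

theorem phiMatrix_norm_le_of_dissipative
    {N : ℕ} (A : Matrix (Fin N) (Fin N) ℝ)
    (hA : ∀ w : Fin N → ℝ, A.mulVec w ⬝ᵥ w ≤ 0)
    (k : ℕ) (hk : 1 ≤ k) :
    ‖phiMatrix k A‖ ≤ 1 / (Nat.factorial k) :=
  phiMatrix_norm_le_of_dissipative_general A hA k
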